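/- Let q = p^d be a prime power with d ≥ 2 and let H = {u ∈ GL_2(F_q) : det u ∈ F_p^*}. Let d₂ ≥ 1 divide d, d₂ < d, and let F_{p^{d₂}} ⊆ F_q be the subfield of cardinality p^{d₂}. Set S = {u ∈ H : tr u ∈ F_{p^{d₂}}}. Then |S|/|H| ≤ C · p^{d₂ - d} for an absolute constant C (e.g. C = 4), i.e. the proportion of elements of H with trace in the proper subfield is at most 4·p^{d₂}/p^{d}. -/
import Mathlib
open Matrix

section aux
variable {p : ℕ} {F : Type*} [Field F] [Fintype F]

lemma aux_S_card (hp : p.Prime) [CharP F p] (K : Subfield F) :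
    Nat.card {u : GL (Fin 2) F //
        ((u : Matrix (Fin 2) (Fin 2) F)).trace ∈ K ∧
        ((u : Matrix (Fin 2) (Fin 2) F)).det ∈
          Set.range (ZMod.castHom (dvd_refl p) F)} ≤
      Nat.card K * ((p - 1) * (Fintype.card F * (Fintype.card F * 2))) := by
  classical
  haveI : Fact p.Prime := ⟨hp⟩
  haveI : NeZero p := ⟨hp.ne_zero⟩
  have hcast : Function.Injective (ZMod.castHom (dvd_refl p) F) :=
    (ZMod.castHom (dvd_refl p) F).injective
  set T := {u : GL (Fin 2) F //
        ((u : Matrix (Fin 2) (Fin 2) F)).trace ∈ K ∧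
        ((u : Matrix (Fin 2) (Fin 2) F)).det ∈
          Set.range (ZMod.castHom (dvd_refl p) F)} with hT
  have hdetne : ∀ u : T, ((u.1 : Matrix (Fin 2) (Fin 2) F)).det ≠ 0 := fun u =>
    ((Matrix.isUnit_iff_isUnit_det _).mp u.1.isUnit).ne_zero
  let f : T → K × {a : ZMod p // a ≠ 0} × F × F × Bool := fun u =>
    (⟨((u.1 : Matrix (Fin 2) (Fin 2) F)).trace, u.2.1⟩,
     ⟨u.2.2.choose, by
        intro h0
        apply hdetne u
        rw [← u.2.2.choose_spec, h0, map_zero]⟩,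
     (u.1 : Matrix (Fin 2) (Fin 2) F) 0 0,
     if (u.1 : Matrix (Fin 2) (Fin 2) F) 0 1 = 0 then
       ((u.1 : Matrix (Fin 2) (Fin 2) F) 1 0, true)
     else ((u.1 : Matrix (Fin 2) (Fin 2) F) 0 1, false))
  have hf : Function.Injective f := by
    rintro u v h
    simp only [f, Prod.mk.injEq, Subtype.mk.injEq] at h
    obtain ⟨htr, hα, hx, henc⟩ := h
    set A := (u.1 : Matrix (Fin 2) (Fin 2) F) with hA
    set B := (v.1 : Matrix (Fin 2) (Fin 2) F) with hB
    have hdet : A.det = B.det := by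
      rw [← u.2.2.choose_spec, ← v.2.2.choose_spec, hα]
    have h00 : A 0 0 = B 0 0 := hx
    have h11 : A 1 1 = B 1 1 := by
      have := htr
      rw [Matrix.trace_fin_two, Matrix.trace_fin_two] at this
      rw [h00] at this
      exact add_left_cancel this
    have hprod : A 0 1 * A 1 0 = B 0 1 * B 1 0 := by
      rw [Matrix.det_fin_two, Matrix.det_fin_two] at hdet
      rw [h00, h11] at hdet
      linear_combination -hdet
    have h0110 : A 0 1 = B 0 1 ∧ A 1 0 = B 1 0 := by
      by_cases hA01 : A 0 1 = 0 <;> by_cases hB01 : B 0 1 = 0 <;>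
        simp [hA01, hB01] at henc
      · exact ⟨hA01.trans hB01.symm, henc⟩
      · refine ⟨henc, ?_⟩
        rw [henc] at hprod
        exact mul_left_cancel₀ hB01 hprod
    have : A = B := by
      ext i j
      fin_cases i <;> fin_cases j
      · exact h00
      · exact h0110.1
      · exact h0110.2
      · exact h11
    exact Subtype.ext (Units.ext this)
  have hle := Nat.card_le_card_of_injective f hf
  have hcardT : Nat.card (K × {a : ZMod p // a ≠ 0} × F × F × Bool) =
      Nat.card K * ((p - 1) * (Fintype.card F * (Fintype.card F * 2))) := by
    simp [Nat.card_prod, Nat.card_eq_fintype_card,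
      ← Nat.card_congr (unitsEquivNeZero (G₀ := ZMod p)),
      Nat.card_eq_fintype_card, ZMod.card_units, mul_comm]
  rw [← hcardT]
  exact hle
end aux

section auxH
variable {p : ℕ} {F : Type*} [Field F] [Fintype F]

noncomputable def diagGL (a : F) (ha : a ≠ 0) : GL (Fin 2) F :=
  Matrix.GeneralLinearGroup.mkOfDetNeZero (Matrix.diagonal ![a, 1]) (by
    simp [Matrix.det_diagonal, Fin.prod_univ_two, ha])

lemma diagGL_coe (a : F) (ha : a ≠ 0) :
    ((diagGL a ha : GL (Fin 2) F) : Matrix (Fin 2) (Fin 2) F) = Matrix.diagonal ![a, 1] := rfl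

lemma diagGL_det (a : F) (ha : a ≠ 0) :
    ((diagGL a ha : GL (Fin 2) F) : Matrix (Fin 2) (Fin 2) F).det = a := by
  rw [diagGL_coe]
  simp [Matrix.det_diagonal, Fin.prod_univ_two]

lemma det_surj : Function.Surjective
    (Matrix.GeneralLinearGroup.det : GL (Fin 2) F →* Fˣ) := by
  intro a
  refine ⟨diagGL a.val a.ne_zero, Units.ext ?_⟩
  rw [Matrix.GeneralLinearGroup.val_det_apply, diagGL_det]

lemma card_ker_det :
    Nat.card (MonoidHom.ker
        (Matrix.GeneralLinearGroup.det : GL (Fin 2) F →* Fˣ)) =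
      Fintype.card F * (Fintype.card F * Fintype.card F - 1) := by
  classical
  have hq2 : 2 ≤ Fintype.card F := Fintype.one_lt_card
  have h1 : Nat.card (GL (Fin 2) F) =
      Nat.card Fˣ * Nat.card (MonoidHom.ker
        (Matrix.GeneralLinearGroup.det : GL (Fin 2) F →* Fˣ)) := by
    rw [Subgroup.card_eq_card_quotient_mul_card_subgroup
      (MonoidHom.ker (Matrix.GeneralLinearGroup.det : GL (Fin 2) F →* Fˣ))]
    rw [Nat.card_congr (QuotientGroup.quotientKerEquivOfSurjective _ det_surj).toEquiv]
  have h2 : Nat.card (GL (Fin 2) F) =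
      (Fintype.card F ^ 2 - 1) * (Fintype.card F ^ 2 - Fintype.card F) := by
    rw [Matrix.card_GL_field, Fin.prod_univ_two]
    norm_num
  have h3 : Nat.card Fˣ = Fintype.card F - 1 := by
    rw [Nat.card_eq_fintype_card, Fintype.card_units]
  have key : ∀ q : ℕ, 2 ≤ q → (q ^ 2 - 1) * (q ^ 2 - q) = (q - 1) * (q * (q * q - 1)) := by
    intro q hq
    have h1' : 1 ≤ q := by omega
    have h2' : q ≤ q ^ 2 := by nlinarith
    have h3' : 1 ≤ q * q := by nlinarith
    have h4' : 1 ≤ q ^ 2 := by nlinarith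
    zify [h1', h2', h3', h4']
    ring
  rw [h2, h3, key _ hq2] at h1
  exact (Nat.eq_of_mul_eq_mul_left (by omega) h1.symm)

end auxH

section auxH2
variable {p : ℕ} {F : Type*} [Field F] [Fintype F]

lemma aux_H_card (hp : p.Prime) [CharP F p] :
    (p - 1) * (Fintype.card F * (Fintype.card F * Fintype.card F - 1)) ≤
      Nat.card {u : GL (Fin 2) F //
          ((u : Matrix (Fin 2) (Fin 2) F)).det ∈
            Set.range (ZMod.castHom (dvd_refl p) F)} := by
  classical
  haveI : Fact p.Prime := ⟨hp⟩
  haveI : NeZero p := ⟨hp.ne_zero⟩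
  have hcast : Function.Injective (ZMod.castHom (dvd_refl p) F) :=
    (ZMod.castHom (dvd_refl p) F).injective
  have castne : ∀ a : {a : ZMod p // a ≠ 0}, ZMod.castHom (dvd_refl p) F a.1 ≠ 0 := by
    intro a h
    exact a.2 (hcast (h.trans (map_zero _).symm))
  have hker1 : ∀ u : MonoidHom.ker
      (Matrix.GeneralLinearGroup.det : GL (Fin 2) F →* Fˣ),
      ((u.1 : Matrix (Fin 2) (Fin 2) F)).det = 1 := by
    intro u
    have := u.2
    rw [MonoidHom.mem_ker] at this
    have := congrArg Units.val this
    rwa [Matrix.GeneralLinearGroup.val_det_apply] at this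
  let θ : {a : ZMod p // a ≠ 0} × (MonoidHom.ker
        (Matrix.GeneralLinearGroup.det : GL (Fin 2) F →* Fˣ)) →
      {u : GL (Fin 2) F //
          ((u : Matrix (Fin 2) (Fin 2) F)).det ∈
            Set.range (ZMod.castHom (dvd_refl p) F)} := fun x =>
    ⟨x.2.1 * diagGL (ZMod.castHom (dvd_refl p) F x.1.1) (castne x.1),
     ⟨x.1.1, by
        rw [Units.val_mul, Matrix.det_mul, hker1, diagGL_det, one_mul]⟩⟩
  have hdetθ : ∀ x, ((((θ x).1 : GL (Fin 2) F)) : Matrix (Fin 2) (Fin 2) F).det =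
      ZMod.castHom (dvd_refl p) F x.1.1 := by
    intro x
    show ((x.2.1 * diagGL _ _ : GL (Fin 2) F) : Matrix (Fin 2) (Fin 2) F).det = _
    rw [Units.val_mul, Matrix.det_mul, hker1, diagGL_det, one_mul]
  have hθ : Function.Injective θ := by
    rintro x y h
    have hdet : ZMod.castHom (dvd_refl p) F x.1.1 = ZMod.castHom (dvd_refl p) F y.1.1 := by
      rw [← hdetθ x, ← hdetθ y, h]
    have ha : x.1 = y.1 := Subtype.ext (hcast hdet)
    have hGL : x.2.1 * diagGL (ZMod.castHom (dvd_refl p) F x.1.1) (castne x.1) =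
        y.2.1 * diagGL (ZMod.castHom (dvd_refl p) F y.1.1) (castne y.1) :=
      Subtype.ext_iff.mp h
    have hDeq : diagGL (ZMod.castHom (dvd_refl p) F x.1.1) (castne x.1) =
        diagGL (ZMod.castHom (dvd_refl p) F y.1.1) (castne y.1) := by
      rw [ha]
    rw [hDeq] at hGL
    have hu : x.2 = y.2 := Subtype.ext (mul_right_cancel hGL)
    exact Prod.ext ha hu
  have hle := Nat.card_le_card_of_injective θ hθ
  rw [Nat.card_prod] at hle
  rw [← Nat.card_congr (unitsEquivNeZero (G₀ := ZMod p)), Nat.card_eq_fintype_card,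
    ZMod.card_units, card_ker_det] at hle
  exact hle

end auxH2

theorem stmt_14 (p d d₂ : ℕ) (hp : p.Prime) {F : Type*} [Field F] [Fintype F]
    [CharP F p] (hcard : Fintype.card F = p ^ d) (hd : 2 ≤ d)
    (K : Subfield F) (hK : Nat.card K = p ^ d₂)
    (hd₂ : 1 ≤ d₂) (hdvd : d₂ ∣ d) (hlt : d₂ < d) :
    (Nat.card {u : GL (Fin 2) F //
        ((u : Matrix (Fin 2) (Fin 2) F)).trace ∈ K ∧
        ((u : Matrix (Fin 2) (Fin 2) F)).det ∈
          Set.range (ZMod.castHom (dvd_refl p) F)} : ℝ) ≤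
      4 * (p : ℝ) ^ d₂ / (p : ℝ) ^ d *
        (Nat.card {u : GL (Fin 2) F //
          ((u : Matrix (Fin 2) (Fin 2) F)).det ∈
            Set.range (ZMod.castHom (dvd_refl p) F)} : ℝ) := by
  have hp2 : 2 ≤ p := hp.two_le
  have hq2 : 2 ≤ Fintype.card F := Fintype.one_lt_card
  have hS := aux_S_card (F := F) hp K
  have hH := aux_H_card (F := F) (p := p) hp
  rw [hK] at hS
  set S := Nat.card {u : GL (Fin 2) F //
        ((u : Matrix (Fin 2) (Fin 2) F)).trace ∈ K ∧
        ((u : Matrix (Fin 2) (Fin 2) F)).det ∈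
          Set.range (ZMod.castHom (dvd_refl p) F)} with hSdef
  set H := Nat.card {u : GL (Fin 2) F //
          ((u : Matrix (Fin 2) (Fin 2) F)).det ∈
            Set.range (ZMod.castHom (dvd_refl p) F)} with hHdef
  have hQcast : (Fintype.card F : ℝ) = (p : ℝ) ^ d := by exact_mod_cast congrArg Nat.cast hcard
  rw [← hQcast]
  set Q : ℝ := (Fintype.card F : ℝ) with hQdef
  have hQ2 : (2 : ℝ) ≤ Q := by rw [hQdef]; exact_mod_cast hq2
  have hQpos : (0 : ℝ) < Q := by linarith
  have hP2 : (2 : ℝ) ≤ (p : ℝ) := by exact_mod_cast hp2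
  have hxpos : (0 : ℝ) < (p : ℝ) ^ d₂ := by positivity
  have hS' : (S : ℝ) ≤ (p : ℝ) ^ d₂ * (((p : ℝ) - 1) * (Q * (Q * 2))) := by
    have := (Nat.cast_le (α := ℝ)).mpr hS
    push_cast [Nat.cast_sub hp.one_le] at this
    convert this using 2 <;> push_cast <;> ring
  have hH' : ((p : ℝ) - 1) * (Q * (Q * Q - 1)) ≤ (H : ℝ) := by
    have := (Nat.cast_le (α := ℝ)).mpr hH
    have h1 : 1 ≤ Fintype.card F * Fintype.card F := by nlinarith
    push_cast [Nat.cast_sub hp.one_le, Nat.cast_sub h1] at this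
    convert this using 2 <;> push_cast <;> ring
  have key2 : Q * (Q * 2) ≤ 4 / Q * (Q * (Q * Q - 1)) := by
    rw [div_mul_eq_mul_div, le_div_iff₀ hQpos]
    nlinarith
  calc (S : ℝ) ≤ (p : ℝ) ^ d₂ * (((p : ℝ) - 1) * (Q * (Q * 2))) := hS'
    _ ≤ (p : ℝ) ^ d₂ * (((p : ℝ) - 1) * (4 / Q * (Q * (Q * Q - 1)))) := by
        have hy : (0 : ℝ) ≤ (p : ℝ) - 1 := by linarith
        gcongr
    _ = 4 * (p : ℝ) ^ d₂ / Q * (((p : ℝ) - 1) * (Q * (Q * Q - 1))) := by ring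
    _ ≤ 4 * (p : ℝ) ^ d₂ / Q * (H : ℝ) := by
        apply mul_le_mul_of_nonneg_left hH'
        positivity
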